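/- Let M1 = ⟨I,T1⟩ and M2 = ⟨I,T2⟩ be three-valued models of a disjunctive definite program P with the same set I of inadmissible atoms. Then ⟨I, T1 ∩ T2⟩ is also a model of P. -/
import Mathlib


open Classical

/-- The three truth values: true, false, inadmissible. -/
inductive TV : Type where
  | t : TV
  | f : TV
  | i : TV
deriving DecidableEq

/-- Kleene strong three-valued conjunction. -/
def TV.and : TV → TV → TV
  | .t, .t => .t
  | .f, _ => .f
  | _, .f => .f
  | _, _ => .i

/-- Kleene strong three-valued disjunction. -/
def TV.or : TV → TV → TV
  | .f, .f => .f
  | .t, _ => .t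
  | _, .t => .t
  | _, _ => .i

/-- Ground body formulas over a set `α` of ground atoms:
built from atoms using binary conjunction and disjunction. -/
inductive Body (α : Type*) : Type _ where
  | atom : α → Body α
  | conj : Body α → Body α → Body α
  | disj : Body α → Body α → Body α

variable {α : Type*}

/-- Value of an atom in the interpretation `⟨I,T⟩` (inadmissible atoms `I`,
true atoms `T`, all other atoms false). -/
noncomputable def atomVal (I T : Set α) (a : α) : TV :=
  if a ∈ T then TV.t else if a ∈ I then TV.i else TV.f

/-- Kleene strong three-valued evaluation of a body formula in `⟨I,T⟩`. -/
noncomputable def beval (I T : Set α) : Body α → TV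
  | .atom a => atomVal I T a
  | .conj b c => TV.and (beval I T b) (beval I T c)
  | .disj b c => TV.or (beval I T b) (beval I T c)

/-- A (ground) disjunctive definite program: a set of ground clause instances
`H ← B`, represented as pairs `(H, B)`. -/
abbrev Program (α : Type*) := Set (α × Body α)

/-- `⟨I,T⟩` is a model of `P`: no clause instance `H ← B` in `P` has `H`
evaluating to F while `B` evaluates to T or I (i.e. head F implies body F). -/
def IsModel (P : Program α) (I T : Set α) : Prop :=
  ∀ c ∈ P, atomVal I T c.1 = TV.f → beval I T c.2 = TV.f


lemma and_f_left : ∀ y, TV.and TV.f y = TV.f := by intro y; cases y <;> rfl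
lemma and_f_right : ∀ x, TV.and x TV.f = TV.f := by intro x; cases x <;> rfl
lemma and_eq_f {x y : TV} (h : TV.and x y = TV.f) : x = TV.f ∨ y = TV.f := by
  cases x <;> cases y <;> simp_all [TV.and]
lemma or_eq_f {x y : TV} (h : TV.or x y = TV.f) : x = TV.f ∧ y = TV.f := by
  cases x <;> cases y <;> simp_all [TV.or]

lemma beval_f_mono {α : Type*} (I T T' : Set α) (hsub : T' ⊆ T) :
    ∀ b : Body α, beval I T b = TV.f → beval I T' b = TV.f := by
  intro b
  induction b with
  | atom a =>
      simp only [beval, atomVal]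
      intro h
      split_ifs at h ⊢ with h1 h2 <;> simp_all
      · exact h2 (hsub h1)
  | conj b c ihb ihc =>
      simp only [beval]
      intro h
      rcases and_eq_f h with hf | hf
      · rw [ihb hf]; exact and_f_left _
      · rw [ihc hf]; exact and_f_right _
  | disj b c ihb ihc =>
      simp only [beval]
      intro h
      obtain ⟨hb, hc⟩ := or_eq_f h
      rw [ihb hb, ihc hc]; rfl

/-- If `⟨I,T₁⟩` and `⟨I,T₂⟩` are models of `P` with the same set
`I` of inadmissible atoms, then `⟨I, T₁ ∩ T₂⟩` is also a model of `P`. -/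
theorem model_inter_true {α : Type*} (P : Program α) (I T₁ T₂ : Set α)
    (h₁disj : Disjoint I T₁) (h₂disj : Disjoint I T₂)
    (h₁ : IsModel P I T₁) (h₂ : IsModel P I T₂) :
    IsModel P I (T₁ ∩ T₂):= by
  intro c hc hhead
  have hI : c.1 ∉ I := by
    by_contra hIn
    simp [atomVal, hIn] at hhead
    split_ifs at hhead <;> simp_all
  have hT : c.1 ∉ T₁ ∨ c.1 ∉ T₂ := by
    by_contra hcon
    push_neg at hcon
    simp [atomVal, hcon.1, hcon.2, Set.mem_inter_iff] at hhead
  rcases hT with h | h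
  · have : atomVal I T₁ c.1 = TV.f := by simp [atomVal, h, hI]
    exact beval_f_mono I T₁ (T₁ ∩ T₂) Set.inter_subset_left c.2 (h₁ c hc this)
  · have : atomVal I T₂ c.1 = TV.f := by simp [atomVal, h, hI]
    exact beval_f_mono I T₂ (T₁ ∩ T₂) Set.inter_subset_right c.2 (h₂ c hc this)
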